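/- arXiv:1705.11188 — 3 statements merged into one kernel-verified Lean document; each statement's English description precedes it below -/
import Mathlib

section
/- Let m_1,…,m_{2d} satisfy {m_i,m_j} = 2δ_{ij}I and set Q_{k,l} = m_k m_l ⊗ m_k m_l for k < l. Then the operators Q_{i,i+1} (i = 1,…,2d−1) pairwise commute, and for any 1 ≤ k < l ≤ 2d one has Q_{k,l} = Π_{i=k}^{l−1} Q_{i,i+1}. Consequently the joint +1 eigenspace of all Q_{k,l} (1 ≤ k < l ≤ 2d) equals the joint +1 eigenspace of the Q_{i,i+1} alone. -/
open Matrix Kronecker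

/-- `Q_{k,l} = m_k m_l ⊗ m_k m_l` on `H ⊗ H`. -/
noncomputable def Qop {n : ℕ} (m : ℕ → Matrix (Fin n) (Fin n) ℂ) (k l : ℕ) :
    Matrix (Fin n × Fin n) (Fin n × Fin n) ℂ :=
  (m k * m l) ⊗ₖ (m k * m l)

/-!
Any two products of Majorana operators commute or anticommute, and the sign disappears in
`x ⊗ x`, so the `Q_{i,i+1}` commute. Since `m_i² = 1`, the product
`(m_k m_{k+1})(m_{k+1} m_{k+2}) ⋯ (m_{l-1} m_l)` telescopes to `m_k m_l`, and `A ↦ A ⊗ A` is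
multiplicative, which gives `Q_{k,l} = Π Q_{i,i+1}`; a vector fixed by every factor is fixed by
the product.
-/

variable {R : Type*}

def SignCommute [Ring R] (x y : R) : Prop :=
  x * y = y * x ∨ x * y = -(y * x)

namespace SignCommute

variable [Ring R] {x y z : R}

theorem refl (x : R) : SignCommute x x :=
  Or.inl rfl

theorem symm (h : SignCommute x y) : SignCommute y x := by
  rcases h with h | h
  · exact Or.inl h.symm
  · exact Or.inr (by rw [h, neg_neg])

theorem mul_right (hy : SignCommute x y) (hz : SignCommute x z) : SignCommute x (y * z) := by
  have hxyz : x * (y * z) = x * y * z := (mul_assoc x y z).symm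
  rcases hy with hy | hy <;> rcases hz with hz | hz <;>
    [left; right; right; left] <;>
    rw [hxyz, hy] <;> simp only [neg_mul, mul_assoc, hz, mul_neg, neg_neg]

theorem mul_left (hx : SignCommute x z) (hy : SignCommute y z) : SignCommute (x * y) z :=
  (hx.symm.mul_right hy.symm).symm

end SignCommute

theorem Matrix.neg_kronecker_neg {l m n p : Type*} [CommRing R] (A : Matrix l m R)
    (B : Matrix n p R) : (-A) ⊗ₖ (-B) = A ⊗ₖ B := by
  ext
  simp

section Kronecker

variable {n : Type*} [Fintype n] [DecidableEq n] [CommRing R]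

def Matrix.kroneckerSelf : Matrix n n R →* Matrix (n × n) (n × n) R where
  toFun A := A ⊗ₖ A
  map_one' := one_kronecker_one
  map_mul' A B := mul_kronecker_mul A B A B

theorem Matrix.commute_kronecker_self {A B : Matrix n n R} (h : SignCommute A B) :
    Commute (A ⊗ₖ A) (B ⊗ₖ B) := by
  change A ⊗ₖ A * B ⊗ₖ B = B ⊗ₖ B * A ⊗ₖ A
  rw [← mul_kronecker_mul, ← mul_kronecker_mul]
  rcases h with h | h
  · rw [h]
  · rw [h, neg_kronecker_neg]

end Kronecker

theorem List.prod_range'_map_mul_succ [Monoid R] (m : ℕ → R) (k j : ℕ)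
    (hsq : ∀ i, k < i → i ≤ k + j → m i * m i = 1) :
    ((List.range' k (j + 1)).map fun i => m i * m (i + 1)).prod = m k * m (k + j + 1) := by
  induction j with
  | zero => simp
  | succ j ih =>
    rw [List.range'_concat, List.map_append, List.prod_append,
      ih fun i hki hij => hsq i hki (by omega)]
    simp only [List.map_cons, List.map_nil, List.prod_cons, List.prod_nil, mul_one, one_mul,
      ← Nat.add_assoc]
    rw [mul_assoc, ← mul_assoc (m (k + j + 1)), hsq _ (by omega) (by omega), one_mul]

section CAR

variable {𝕜 : Type*} [Ring R] {m : ℕ → R} {N : ℕ}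

theorem mul_self_eq_one_of_car [Field 𝕜] [CharZero 𝕜] [Module 𝕜 R]
    (hcar : ∀ i j, i < N → j < N →
      m i * m j + m j * m i = if i = j then (2 : 𝕜) • (1 : R) else 0)
    {i : ℕ} (hi : i < N) : m i * m i = 1 := by
  have h := hcar i i hi hi
  rw [if_pos rfl, ← two_smul 𝕜] at h
  exact smul_right_injective R two_ne_zero h

theorem signCommute_of_car [Semiring 𝕜] [Module 𝕜 R]
    (hcar : ∀ i j, i < N → j < N →
      m i * m j + m j * m i = if i = j then (2 : 𝕜) • (1 : R) else 0)
    {i j : ℕ} (hi : i < N) (hj : j < N) : SignCommute (m i) (m j) := by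
  by_cases hij : i = j
  · exact hij ▸ SignCommute.refl _
  · have h := hcar i j hi hj
    rw [if_neg hij] at h
    exact Or.inr (eq_neg_of_add_eq_zero_left h)

end CAR

theorem Matrix.list_prod_mulVec_eq_self {n : Type*} [Fintype n] [DecidableEq n] [CommRing R]
    {L : List (Matrix n n R)} {v : n → R} (h : ∀ A ∈ L, A *ᵥ v = v) : L.prod *ᵥ v = v :=
  List.prod_induction (· *ᵥ v = v) (fun A B hA hB => by rw [← mulVec_mulVec, hB, hA])
    (one_mulVec v) h

theorem Qop_eq_kroneckerSelf {n : ℕ} (m : ℕ → Matrix (Fin n) (Fin n) ℂ) (k l : ℕ) :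
    Qop m k l = kroneckerSelf (m k * m l) :=
  rfl

theorem Qop_eq_prod_range' {n : ℕ} {m : ℕ → Matrix (Fin n) (Fin n) ℂ} {k l : ℕ} (hkl : k < l)
    (hsq : ∀ i, k < i → i < l → m i * m i = 1) :
    Qop m k l = ((List.range' k (l - k)).map fun i => Qop m i (i + 1)).prod := by
  obtain ⟨j, rfl⟩ : ∃ j, l = k + j + 1 := ⟨l - k - 1, by omega⟩
  have hlen : k + j + 1 - k = j + 1 := by omega
  simp only [Qop_eq_kroneckerSelf, hlen]
  rw [← List.prod_range'_map_mul_succ m k j fun i hki hij => hsq i hki (by omega), map_list_prod,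
    List.map_map]
  rfl

/-- For Majorana operators `m_1,…,m_{2d}` (0-based: `m_0,…,m_{2d-1}`) with
`{m_i,m_j} = 2δ_{ij}I`: the nearest-neighbour operators `Q_{i,i+1}` pairwise commute;
`Q_{k,l} = Π_{i=k}^{l-1} Q_{i,i+1}`; and the joint `+1` eigenspace of all the `Q_{k,l}`
equals that of the `Q_{i,i+1}` alone. -/
theorem stmt_9 (d n : ℕ) (m : ℕ → Matrix (Fin n) (Fin n) ℂ)
    (hcar : ∀ i j, i < 2 * d → j < 2 * d → m i * m j + m j * m i =
      if i = j then (2 : ℂ) • (1 : Matrix (Fin n) (Fin n) ℂ) else 0) :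
    (∀ i j, i + 1 < 2 * d → j + 1 < 2 * d →
        Qop m i (i + 1) * Qop m j (j + 1) = Qop m j (j + 1) * Qop m i (i + 1)) ∧
      (∀ k l, k < l → l < 2 * d →
        Qop m k l = (((List.range' k (l - k)).map fun i => Qop m i (i + 1))).prod) ∧
      (∀ v : Fin n × Fin n → ℂ,
        (∀ i, i + 1 < 2 * d → Qop m i (i + 1) *ᵥ v = v) ↔
          (∀ k l, k < l → l < 2 * d → Qop m k l *ᵥ v = v)) := by
  have hsc : ∀ i j, i < 2 * d → j < 2 * d → SignCommute (m i) (m j) :=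
    fun i j hi hj => signCommute_of_car hcar hi hj
  have hprod : ∀ k l, k < l → l < 2 * d →
      Qop m k l = ((List.range' k (l - k)).map fun i => Qop m i (i + 1)).prod :=
    fun k l hkl hl =>
      Qop_eq_prod_range' hkl fun i _ hil => mul_self_eq_one_of_car hcar (hil.trans hl)
  refine ⟨fun i j hi hj => commute_kronecker_self ?_, hprod, fun v => ⟨?_, ?_⟩⟩
  · exact ((hsc i j (by omega) (by omega)).mul_right (hsc i (j + 1) (by omega) hj)).mul_left
      ((hsc (i + 1) j hi (by omega)).mul_right (hsc (i + 1) (j + 1) hi hj))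
  · intro hfix k l hkl hl
    rw [hprod k l hkl hl]
    refine list_prod_mulVec_eq_self ?_
    simp only [List.mem_map, List.mem_range'_1]
    rintro _ ⟨i, hi, rfl⟩
    exact hfix i (by omega)
  · exact fun hfix i hi => hfix i (i + 1) (Nat.lt_succ_self i) hi
end

section
/- Let K be a connected compact Lie subgroup of U(H) for a finite-dimensional Hilbert space H, and let V ∈ U(H) be a unitary that does not normalize K (i.e., V K V† ≠ K). Let G₀ be the identity component of the closed subgroup generated by K and V. Then Lie(K) is a proper subalgebra of Lie(G₀); in particular dim Lie(K) < dim Lie(G₀). -/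
open Matrix

/-- A subset of matrices closed under `1`, multiplication and `star` (within the
unitary group, `star` is the inverse). -/
def IsMatSubgroup {n : ℕ} (S : Set (Matrix (Fin n) (Fin n) ℂ)) : Prop :=
  1 ∈ S ∧ (∀ a ∈ S, ∀ b ∈ S, a * b ∈ S) ∧ ∀ a ∈ S, star a ∈ S

/-- The Lie algebra of a set `S` of unitaries: skew-Hermitian matrices whose
one-parameter groups stay in `S`. -/
noncomputable def lieOf {n : ℕ} (S : Set (Matrix (Fin n) (Fin n) ℂ)) :
    Set (Matrix (Fin n) (Fin n) ℂ) :=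
  {X | Xᴴ = -X ∧ ∀ t : ℝ, NormedSpace.exp (t • X) ∈ S}

/-! The Lie algebra of a closed subgroup `G ⊆ U(n)` is a real subspace: `exp (X + Y)` is the
limit of `exp (m • Z m)` with `Z m = log (exp (X / m) * exp (Y / m))`, and such limits stay in `G`.
By the inverse function theorem for `(X, Y) ↦ exp X * exp Y` on `lieOf G × C`, with `C` a
complement, `exp` maps `lieOf G` onto a neighbourhood of `1` in `G`: otherwise the `C`-components
of nearby elements of `G` would have a limiting direction in `C ∩ lieOf G = 0`.
Hence if `Lie(G₀) ⊆ Lie(K)`, the closed subgroup `K` is open in `G`, so it contains `G₀` and then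
equals it. But `G₀` is normalised by `V ∈ G`, contradicting `V K V† ≠ K`. -/

open NormedSpace Filter Topology
open scoped Matrix.Norms.Operator

local notation "𝕄" n:max => Matrix (Fin n) (Fin n) ℂ

theorem image_connectedComponentIn_subset {X : Type*} [TopologicalSpace X] {F : Set X} {x : X}
    {f : X → X} (hf : Continuous f) (hfF : Set.MapsTo f F F)
    (hfx : f x ∈ connectedComponentIn F x) :
    f '' connectedComponentIn F x ⊆ connectedComponentIn F x := by
  have hx : x ∈ connectedComponentIn F x :=
    mem_connectedComponentIn (connectedComponentIn_nonempty_iff.mp ⟨_, hfx⟩)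
  rw [connectedComponentIn_eq hfx] at hx ⊢
  exact (isPreconnected_connectedComponentIn.image f hf.continuousOn).subset_connectedComponentIn
    ⟨x, hx, rfl⟩ (Set.image_subset_iff.mpr fun y hy => hfF (connectedComponentIn_subset F _ hy))

theorem IsClosed.connectedComponentIn {X : Type*} [TopologicalSpace X] {F : Set X}
    (hF : IsClosed F) {x : X} (hx : x ∈ F) : IsClosed (connectedComponentIn F x) := by
  rw [connectedComponentIn_eq_image hx]
  exact hF.isClosedMap_subtype_val _ isClosed_connectedComponent

variable {n : ℕ}

theorem exp_neg_eq_star_of_mem_unitaryGroup {Z : 𝕄 n} (hZ : exp Z ∈ unitaryGroup (Fin n) ℂ) :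
    exp (-Z) = star (exp Z) := by
  rw [Matrix.exp_neg]
  exact Matrix.inv_eq_left_inv (Matrix.mem_unitaryGroup_iff'.mp hZ)

theorem exp_add_smul (a b : ℝ) (Z : 𝕄 n) : exp ((a + b) • Z) = exp (a • Z) * exp (b • Z) := by
  rw [add_smul, Matrix.exp_add_of_commute]
  exact ((Commute.refl Z).smul_left a).smul_right b

theorem hasDerivAt_exp_smul_zero (X : 𝕄 n) : HasDerivAt (fun t : ℝ => exp (t • X)) X 0 := by
  have h := hasDerivAt_exp_smul_const (𝕂 := ℝ) X 0
  rw [zero_smul, exp_zero, one_mul] at h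
  exact h

theorem hasStrictFDerivAt_exp_zero_matrix :
    HasStrictFDerivAt (exp : 𝕄 n → 𝕄 n) (ContinuousLinearEquiv.refl ℝ (𝕄 n) : 𝕄 n →L[ℝ] 𝕄 n) 0 :=
  hasStrictFDerivAt_exp_zero

theorem conjTranspose_eq_neg_of_forall_exp_smul_mem_unitaryGroup {Y : 𝕄 n}
    (hY : ∀ t : ℝ, exp (t • Y) ∈ unitaryGroup (Fin n) ℂ) : Yᴴ = -Y := by
  have hfun : (fun t : ℝ => exp (t • Yᴴ)) = fun t => exp (t • -Y) := by
    funext t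
    rw [smul_neg, exp_neg_eq_star_of_mem_unitaryGroup (hY t), Matrix.star_eq_conjTranspose,
      ← Matrix.exp_conjTranspose, Matrix.conjTranspose_smul, star_trivial]
  have hderiv := hasDerivAt_exp_smul_zero Yᴴ
  rw [hfun] at hderiv
  exact hderiv.unique (hasDerivAt_exp_smul_zero (-Y))

theorem hasStrictFDerivAt_exp_mul_exp {p q : Submodule ℝ (𝕄 n)} (hpq : IsCompl p q) :
    HasStrictFDerivAt (fun x : p × q => exp (x.1 : 𝕄 n) * exp (x.2 : 𝕄 n))
      ((Submodule.prodEquivOfIsCompl p q hpq).toContinuousLinearEquiv : p × q →L[ℝ] 𝕄 n) 0 := by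
  have h1 := hasStrictFDerivAt_exp_zero_matrix.comp (0 : p × q)
    (p.subtypeL.comp (ContinuousLinearMap.fst ℝ p q)).hasStrictFDerivAt
  have h2 := hasStrictFDerivAt_exp_zero_matrix.comp (0 : p × q)
    (q.subtypeL.comp (ContinuousLinearMap.snd ℝ p q)).hasStrictFDerivAt
  refine (h1.mul' h2).congr_fderiv (ContinuousLinearMap.ext fun x => ?_)
  simp only [ContinuousLinearMap.comp_apply, ContinuousLinearMap.coe_fst', Prod.fst_zero,
    Submodule.coe_subtypeL, Submodule.subtype_apply, ZeroMemClass.coe_zero, exp_zero,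
    ContinuousLinearEquiv.coe_refl, one_smul, ContinuousLinearMap.coe_snd', Prod.snd_zero,
    MulOpposite.op_one, _root_.add_apply]
  exact add_comm _ _

theorem exists_tendsto_exp_mul_exp_eq {p q : Submodule ℝ (𝕄 n)} (hpq : IsCompl p q) :
    ∃ ψ : 𝕄 n → p × q, Tendsto ψ (𝓝 1) (𝓝 0) ∧
      ∀ᶠ g in 𝓝 1, exp ((ψ g).1 : 𝕄 n) * exp ((ψ g).2 : 𝕄 n) = g := by
  have hφ := hasStrictFDerivAt_exp_mul_exp hpq
  have hφ0 : exp ((0 : p × q).1 : 𝕄 n) * exp ((0 : p × q).2 : 𝕄 n) = 1 := by simp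
  refine ⟨hφ.localInverse _ _ _, ?_, ?_⟩
  · have h := hφ.localInverse_continuousAt.tendsto
    rwa [hφ.localInverse_apply_image, hφ0] at h
  · have h := hφ.eventually_right_inverse
    rwa [hφ0] at h

theorem isMatSubgroup_unitaryGroup : IsMatSubgroup (unitaryGroup (Fin n) ℂ : Set (𝕄 n)) :=
  ⟨one_mem _, fun _ ha _ hb => mul_mem ha hb, fun _ ha => Unitary.star_mem ha⟩

theorem IsMatSubgroup.sInter {𝒮 : Set (Set (𝕄 n))} (h𝒮 : ∀ S ∈ 𝒮, IsMatSubgroup S) :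
    IsMatSubgroup (⋂₀ 𝒮) :=
  ⟨fun S hS => (h𝒮 S hS).1, fun _ ha _ hb S hS => (h𝒮 S hS).2.1 _ (ha S hS) _ (hb S hS),
    fun _ ha S hS => (h𝒮 S hS).2.2 _ (ha S hS)⟩

theorem isMatSubgroup_connectedComponentIn {G : Set (𝕄 n)} (hG : IsMatSubgroup G) :
    IsMatSubgroup (connectedComponentIn G 1) := by
  refine ⟨mem_connectedComponentIn hG.1, fun a ha b hb => ?_, fun a ha => ?_⟩
  · have haG := connectedComponentIn_subset G 1 ha
    exact image_connectedComponentIn_subset (f := (a * ·)) (continuous_const.mul continuous_id)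
      (fun y hy => hG.2.1 a haG y hy) (by rwa [mul_one]) ⟨b, hb, rfl⟩
  · exact image_connectedComponentIn_subset continuous_star (fun y hy => hG.2.2 y hy)
      (by rw [star_one]; exact mem_connectedComponentIn hG.1) ⟨a, ha, rfl⟩

theorem lieOf_mono {S T : Set (𝕄 n)} (hST : S ⊆ T) : lieOf S ⊆ lieOf T :=
  fun _ hX => ⟨hX.1, fun t => hST (hX.2 t)⟩

theorem lieOf_connectedComponentIn (G : Set (𝕄 n)) :
    lieOf (connectedComponentIn G 1) = lieOf G := by
  refine (lieOf_mono (connectedComponentIn_subset G 1)).antisymm fun X hX => ⟨hX.1, fun t => ?_⟩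
  have hline : IsPreconnected (Set.range fun t : ℝ => exp (t • X)) :=
    isPreconnected_range (exp_continuous.comp (continuous_id.smul continuous_const))
  exact hline.subset_connectedComponentIn ⟨0, by simp only [zero_smul, exp_zero]⟩
    (Set.range_subset_iff.mpr hX.2) ⟨t, rfl⟩

theorem smul_mem_lieOf {G : Set (𝕄 n)} {X : 𝕄 n} (hX : X ∈ lieOf G) (c : ℝ) : c • X ∈ lieOf G :=
  ⟨by rw [Matrix.conjTranspose_smul, star_trivial, hX.1, smul_neg],
    fun t => by rw [smul_smul]; exact hX.2 _⟩

theorem mem_lieOf_of_forall_exp_smul_mem {G : Set (𝕄 n)} (hGu : G ⊆ unitaryGroup (Fin n) ℂ)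
    {Y : 𝕄 n} (hY : ∀ t : ℝ, exp (t • Y) ∈ G) : Y ∈ lieOf G :=
  ⟨conjTranspose_eq_neg_of_forall_exp_smul_mem_unitaryGroup fun t => hGu (hY t), hY⟩

namespace IsMatSubgroup

variable {G : Set (𝕄 n)}

theorem zero_mem_lieOf (hG : IsMatSubgroup G) : (0 : 𝕄 n) ∈ lieOf G :=
  ⟨by rw [Matrix.conjTranspose_zero, neg_zero],
    fun t => by rw [smul_zero, exp_zero]; exact hG.1⟩

theorem exp_intCast_smul_mem (hG : IsMatSubgroup G) (hGu : G ⊆ unitaryGroup (Fin n) ℂ)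
    {Z : 𝕄 n} (hZ : exp Z ∈ G) (m : ℤ) : exp ((m : ℝ) • Z) ∈ G := by
  have hZinv : exp (-Z) ∈ G := by
    rw [exp_neg_eq_star_of_mem_unitaryGroup (hGu hZ)]
    exact hG.2.2 _ hZ
  induction m with
  | zero => rw [Int.cast_zero, zero_smul, exp_zero]; exact hG.1
  | succ k ih =>
    rw [Int.cast_add, Int.cast_one, exp_add_smul, one_smul]
    exact hG.2.1 _ ih _ hZ
  | pred k ih =>
    rw [Int.cast_sub, Int.cast_one, sub_eq_add_neg, exp_add_smul, neg_one_smul]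
    exact hG.2.1 _ ih _ hZinv

theorem image_conj_connectedComponentIn (hG : IsMatSubgroup G) {W : 𝕄 n} (hWG : W ∈ G)
    (hWu : W ∈ unitaryGroup (Fin n) ℂ) :
    (fun A => W * A * star W) '' connectedComponentIn G 1 = connectedComponentIn G 1 := by
  have hconj : ∀ U ∈ G, U * star U = 1 →
      (fun A => U * A * star U) '' connectedComponentIn G 1 ⊆ connectedComponentIn G 1 :=
    fun U hUG hU => image_connectedComponentIn_subset (f := fun A => U * A * star U)
      ((continuous_const.mul continuous_id).mul continuous_const)
      (fun y hy => hG.2.1 _ (hG.2.1 _ hUG _ hy) _ (hG.2.2 _ hUG))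
      (by rw [mul_one, hU]; exact mem_connectedComponentIn hG.1)
  have hWW : W * star W = 1 := Matrix.mem_unitaryGroup_iff.mp hWu
  refine (hconj W hWG hWW).antisymm fun A hA => ⟨star W * A * W, ?_, ?_⟩
  · simpa using hconj (star W) (hG.2.2 W hWG) (by simpa using Matrix.mem_unitaryGroup_iff'.mp hWu)
      ⟨A, hA, rfl⟩
  · simp only [← mul_assoc, hWW, one_mul]
    rw [mul_assoc, hWW, mul_one]

/-- Replacing `c i` by `⌊c i⌋` moves `c i • Z i` by at most `‖Z i‖ → 0`, and
`exp (⌊c i⌋ • Z i) = exp (Z i) ^ ⌊c i⌋ ∈ G`. -/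
theorem exp_mem_of_tendsto_smul (hGcl : IsClosed G) (hG : IsMatSubgroup G)
    (hGu : G ⊆ unitaryGroup (Fin n) ℂ) {ι : Type*} {l : Filter ι} [l.NeBot] {Z : ι → 𝕄 n}
    {c : ι → ℝ} {W : 𝕄 n} (hZ : Tendsto Z l (𝓝 0)) (hZG : ∀ᶠ i in l, exp (Z i) ∈ G)
    (hcZ : Tendsto (fun i => c i • Z i) l (𝓝 W)) : exp W ∈ G := by
  have hfract : Tendsto (fun i => Int.fract (c i) • Z i) l (𝓝 0) := by
    refine squeeze_zero_norm (fun i => ?_) (tendsto_zero_iff_norm_tendsto_zero.mp hZ)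
    rw [norm_smul, Real.norm_of_nonneg (Int.fract_nonneg _)]
    exact mul_le_of_le_one_left (norm_nonneg _) (Int.fract_lt_one _).le
  have hfloor : Tendsto (fun i => ((⌊c i⌋ : ℤ) : ℝ) • Z i) l (𝓝 W) := by
    simpa only [Int.fract, sub_smul, sub_sub_cancel, sub_zero] using hcZ.sub hfract
  exact hGcl.mem_of_tendsto ((exp_continuous.tendsto W).comp hfloor)
    (hZG.mono fun i hi => hG.exp_intCast_smul_mem hGu hi _)

theorem mem_lieOf_of_tendsto (hGcl : IsClosed G) (hG : IsMatSubgroup G)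
    (hGu : G ⊆ unitaryGroup (Fin n) ℂ) {ι : Type*} {l : Filter ι} [l.NeBot] {Z : ι → 𝕄 n}
    {Y : 𝕄 n} (hZ : Tendsto Z l (𝓝 0)) (hZG : ∀ᶠ i in l, exp (Z i) ∈ G)
    (hY : Tendsto (fun i => ‖Z i‖⁻¹ • Z i) l (𝓝 Y)) : Y ∈ lieOf G :=
  mem_lieOf_of_forall_exp_smul_mem hGu fun t =>
    hG.exp_mem_of_tendsto_smul hGcl hGu (c := fun i => t * ‖Z i‖⁻¹) hZ hZG
      (by simpa only [mul_smul] using hY.const_smul t)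

theorem exp_add_mem (hGcl : IsClosed G) (hG : IsMatSubgroup G)
    (hGu : G ⊆ unitaryGroup (Fin n) ℂ) {X Y : 𝕄 n} (hX : X ∈ lieOf G) (hY : Y ∈ lieOf G) :
    exp (X + Y) ∈ G := by
  have hexp := hasStrictFDerivAt_exp_zero_matrix (n := n)
  set log := hexp.localInverse exp _ 0
  set γ : ℝ → 𝕄 n := fun s => exp (s • X) * exp (s • Y)
  have hγ0 : γ 0 = exp 0 := by simp [γ]
  have hγ : HasDerivAt γ (X + Y) 0 := by
    have h := (hasDerivAt_exp_smul_zero X).mul (hasDerivAt_exp_smul_zero Y)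
    simp only [zero_smul, exp_zero, one_mul, mul_one] at h
    exact h
  have hlog0 : log (γ 0) = 0 := by rw [hγ0]; exact hexp.localInverse_apply_image
  have hlogγ : HasDerivAt (fun s => log (γ s)) (X + Y) 0 :=
    hexp.to_localInverse.hasFDerivAt.comp_hasDerivAt_of_eq (0 : ℝ) hγ hγ0.symm
  have hγ1 : Tendsto γ (𝓝 0) (𝓝 (exp 0)) := hγ0 ▸ hγ.continuousAt.tendsto
  refine hG.exp_mem_of_tendsto_smul hGcl hGu (l := 𝓝[≠] 0) (Z := fun s => log (γ s))
    (c := fun s => s⁻¹) ?_ ?_ ?_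
  · exact hlog0 ▸ hlogγ.continuousAt.tendsto.mono_left nhdsWithin_le_nhds
  · filter_upwards [nhdsWithin_le_nhds (hγ1.eventually hexp.eventually_right_inverse)] with s hs
    rw [hs]
    exact hG.2.1 _ (hX.2 s) _ (hY.2 s)
  · have h := hasDerivAt_iff_tendsto_slope.mp hlogγ
    simp only [slope_fun_def, vsub_eq_sub, hlog0, sub_zero] at h
    exact h

theorem add_mem_lieOf (hGcl : IsClosed G) (hG : IsMatSubgroup G)
    (hGu : G ⊆ unitaryGroup (Fin n) ℂ) {X Y : 𝕄 n} (hX : X ∈ lieOf G) (hY : Y ∈ lieOf G) :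
    X + Y ∈ lieOf G :=
  mem_lieOf_of_forall_exp_smul_mem hGu fun t => by
    rw [smul_add]
    exact hG.exp_add_mem hGcl hGu (smul_mem_lieOf hX t) (smul_mem_lieOf hY t)

def lieSubmodule (hGcl : IsClosed G) (hG : IsMatSubgroup G) (hGu : G ⊆ unitaryGroup (Fin n) ℂ) :
    Submodule ℝ (𝕄 n) where
  carrier := lieOf G
  add_mem' := hG.add_mem_lieOf hGcl hGu
  zero_mem' := hG.zero_mem_lieOf
  smul_mem' c _ hX := smul_mem_lieOf hX c

theorem span_lieOf (hGcl : IsClosed G) (hG : IsMatSubgroup G)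
    (hGu : G ⊆ unitaryGroup (Fin n) ℂ) :
    Submodule.span ℝ (lieOf G) = hG.lieSubmodule hGcl hGu :=
  Submodule.span_eq (hG.lieSubmodule hGcl hGu)

theorem exp_mem_of_exp_mul_exp_mem (hG : IsMatSubgroup G) {X Y : 𝕄 n} (hX : X ∈ lieOf G)
    (hXY : exp X * exp Y ∈ G) : exp Y ∈ G := by
  have hXinv : exp (-X) ∈ G := by simpa only [neg_one_smul] using hX.2 (-1)
  have hY : exp Y = exp (-X) * (exp X * exp Y) := by
    rw [← mul_assoc, ← Matrix.exp_add_of_commute _ _ (Commute.neg_left (Commute.refl X)),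
      neg_add_cancel, exp_zero, one_mul]
  rw [hY]
  exact hG.2.1 _ hXinv _ hXY

theorem eventually_mem_exp_image_lieOf (hGcl : IsClosed G) (hG : IsMatSubgroup G)
    (hGu : G ⊆ unitaryGroup (Fin n) ℂ) : ∀ᶠ g in 𝓝[G] 1, g ∈ exp '' lieOf G := by
  obtain ⟨C, hLC⟩ := (hG.lieSubmodule hGcl hGu).exists_isCompl
  obtain ⟨ψ, hψ0, hψ⟩ := exists_tendsto_exp_mul_exp_eq hLC
  by_contra hnot
  have := frequently_iff_neBot.mp (not_eventually.mp hnot)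
  set U := Ultrafilter.of (𝓝[G] 1 ⊓ 𝓟 {g | g ∉ exp '' lieOf G})
  have hU : ↑U ≤ 𝓝[G] 1 ⊓ 𝓟 {g | g ∉ exp '' lieOf G} := Ultrafilter.of_le _
  have hU1 : ↑U ≤ 𝓝 (1 : 𝕄 n) := hU.trans (inf_le_left.trans nhdsWithin_le_nhds)
  set Y : 𝕄 n → 𝕄 n := fun g => (ψ g).2
  have hY0 : Tendsto Y U (𝓝 0) :=
    ((continuous_subtype_val.comp continuous_snd).tendsto' _ _ rfl).comp (hψ0.mono_left hU1)
  have hYG : ∀ᶠ g in U, exp (Y g) ∈ G := by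
    filter_upwards [hU1 hψ, hU (inter_mem_inf self_mem_nhdsWithin univ_mem)] with g hg hgG
    exact hG.exp_mem_of_exp_mul_exp_mem (ψ g).1.2 (by rw [hg]; exact hgG.1)
  have hYne : ∀ᶠ g in U, Y g ≠ 0 := by
    filter_upwards [hU1 hψ, hU (inter_mem_inf univ_mem (mem_principal_self _))]
      with g hg hgexp hY
    simp only [Y] at hY
    rw [hY, exp_zero, mul_one] at hg
    exact hgexp.2 ⟨_, (ψ g).1.2, hg⟩
  obtain ⟨W, hWsph, hUW⟩ := (isCompact_sphere (0 : 𝕄 n) 1).ultrafilter_le_nhds'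
    (U.map fun g => ‖Y g‖⁻¹ • Y g) <| Ultrafilter.mem_map.mpr <|
      hYne.mono fun g hg => mem_sphere_zero_iff_norm.mpr (norm_smul_inv_norm hg)
  have hWC : W ∈ C := (Submodule.closed_of_finiteDimensional C).mem_of_tendsto hUW
    (Eventually.of_forall fun g => C.smul_mem _ (ψ g).2.2)
  have hWL : W ∈ hG.lieSubmodule hGcl hGu := hG.mem_lieOf_of_tendsto hGcl hGu hY0 hYG hUW
  have hW0 : W = 0 := (Submodule.disjoint_def.mp hLC.disjoint) W hWL hWC
  simp [hW0] at hWsph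

theorem connectedComponentIn_subset_of_lieOf_subset (hGcl : IsClosed G) (hG : IsMatSubgroup G)
    (hGu : G ⊆ unitaryGroup (Fin n) ℂ) {K : Set (𝕄 n)} (hKcl : IsClosed K)
    (hK : IsMatSubgroup K) (hGK : lieOf G ⊆ lieOf K) : connectedComponentIn G 1 ⊆ K := by
  have hopen : IsOpen (Subtype.val ⁻¹' K : Set G) := by
    refine isOpen_iff_mem_nhds.mpr fun x hxK => ?_
    rw [nhds_subtype_eq_comap_nhdsWithin]
    refine preimage_mem_comap ?_
    have hx1 : star (x : 𝕄 n) * x = 1 := Matrix.mem_unitaryGroup_iff'.mp (hGu x.2)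
    have htrans : Tendsto (fun y => star (x : 𝕄 n) * y) (𝓝[G] (x : 𝕄 n)) (𝓝[G] 1) :=
      tendsto_nhdsWithin_iff.mpr
        ⟨((continuous_const.mul continuous_id).tendsto' _ _ hx1).mono_left nhdsWithin_le_nhds,
          eventually_mem_nhdsWithin.mono fun y hy => hG.2.1 _ (hG.2.2 _ x.2) _ hy⟩
    filter_upwards [htrans (hG.eventually_mem_exp_image_lieOf hGcl hGu)] with y ⟨X, hX, hXy⟩
    have hXK : exp X ∈ K := by simpa using (hGK hX).2 1
    have hy : star (x : 𝕄 n) * y = exp X := hXy.symm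
    rw [← one_mul y, ← Matrix.mem_unitaryGroup_iff.mp (hGu x.2), mul_assoc, hy]
    exact hK.2.1 _ hxK _ hXK
  have hclopen : IsClopen (Subtype.val ⁻¹' K : Set G) :=
    ⟨hKcl.preimage continuous_subtype_val, hopen⟩
  rw [connectedComponentIn_eq_image hG.1]
  rintro _ ⟨y, hy, rfl⟩
  exact hclopen.connectedComponent_subset hK.1 hy

theorem lieOf_ssubset_lieOf_connectedComponentIn (hGcl : IsClosed G) (hG : IsMatSubgroup G)
    (hGu : G ⊆ unitaryGroup (Fin n) ℂ) {K : Set (𝕄 n)} (hKcl : IsClosed K)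
    (hK : IsMatSubgroup K) (hKG : K ⊆ connectedComponentIn G 1) {V : 𝕄 n} (hVG : V ∈ G)
    (hVu : V ∈ unitaryGroup (Fin n) ℂ) (hVK : (fun A => V * A * star V) '' K ≠ K) :
    lieOf K ⊂ lieOf (connectedComponentIn G 1) := by
  refine ⟨lieOf_mono hKG, fun hlie => hVK ?_⟩
  have hGK : connectedComponentIn G 1 ⊆ K := hG.connectedComponentIn_subset_of_lieOf_subset hGcl
    hGu hKcl hK (lieOf_connectedComponentIn G ▸ hlie)
  rw [← hGK.antisymm hKG]
  exact hG.image_conj_connectedComponentIn hVG hVu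

end IsMatSubgroup

theorem finrank_span_lieOf_lt {K G : Set (𝕄 n)} (hKcl : IsClosed K) (hK : IsMatSubgroup K)
    (hKu : K ⊆ unitaryGroup (Fin n) ℂ) (hGcl : IsClosed G) (hG : IsMatSubgroup G)
    (hGu : G ⊆ unitaryGroup (Fin n) ℂ) (hKG : lieOf K ⊂ lieOf G) :
    Module.finrank ℝ (Submodule.span ℝ (lieOf K)) <
      Module.finrank ℝ (Submodule.span ℝ (lieOf G)) := by
  rw [hK.span_lieOf hKcl hKu, hG.span_lieOf hGcl hGu]
  exact Submodule.finrank_lt_finrank_of_lt (SetLike.coe_ssubset_coe.mp hKG)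

/-- Extension by a non-normalizing element: if `K` is a connected compact subgroup of
`U(H)` and the unitary `V` does not normalize `K`, then, with `G` the smallest closed
subgroup of `U(H)` containing `K` and `V` and `G₀` its identity component,
`Lie(K)` is strictly contained in `Lie(G₀)`; in particular
`dim Lie(K) < dim Lie(G₀)`. -/
theorem stmt_17 (n : ℕ) (K : Set (Matrix (Fin n) (Fin n) ℂ))
    (hKsub : ∀ A ∈ K, A ∈ Matrix.unitaryGroup (Fin n) ℂ)
    (hKgrp : IsMatSubgroup K) (hKcpt : IsCompact K) (hKconn : IsConnected K)
    (V : Matrix (Fin n) (Fin n) ℂ) (hV : V ∈ Matrix.unitaryGroup (Fin n) ℂ)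
    (hnotnorm : (fun A => V * A * star V) '' K ≠ K)
    (G G0 : Set (Matrix (Fin n) (Fin n) ℂ))
    (hG : G = ⋂₀ {S | IsClosed S ∧ IsMatSubgroup S ∧
      (∀ A ∈ S, A ∈ Matrix.unitaryGroup (Fin n) ℂ) ∧ K ⊆ S ∧ V ∈ S})
    (hG0 : G0 = connectedComponentIn G 1) :
    lieOf K ⊂ lieOf G0 ∧
      Module.finrank ℝ (Submodule.span ℝ (lieOf K)) <
        Module.finrank ℝ (Submodule.span ℝ (lieOf G0)) := by
  have hU : (unitaryGroup (Fin n) ℂ : Set (𝕄 n)) ∈ {S | IsClosed S ∧ IsMatSubgroup S ∧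
      (∀ A ∈ S, A ∈ unitaryGroup (Fin n) ℂ) ∧ K ⊆ S ∧ V ∈ S} :=
    ⟨isClosed_unitary, isMatSubgroup_unitaryGroup, fun _ hA => hA, hKsub, hV⟩
  subst hG0
  have hGcl : IsClosed G := hG ▸ isClosed_sInter fun _ hS => hS.1
  have hGgrp : IsMatSubgroup G := hG ▸ IsMatSubgroup.sInter fun _ hS => hS.2.1
  have hGu : G ⊆ unitaryGroup (Fin n) ℂ := by rw [hG]; exact fun A hA => hA _ hU
  have hKG : K ⊆ G := by rw [hG]; exact fun A hA S hS => hS.2.2.2.1 hA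
  have hVG : V ∈ G := by rw [hG]; exact fun S hS => hS.2.2.2.2
  have hlie := hGgrp.lieOf_ssubset_lieOf_connectedComponentIn hGcl hGu hKcpt.isClosed hKgrp
    (hKconn.isPreconnected.subset_connectedComponentIn hKgrp.1 hKG) hVG hV hnotnorm
  exact ⟨hlie, finrank_span_lieOf_lt hKcpt.isClosed hKgrp hKsub
    (hGcl.connectedComponentIn hGgrp.1) (isMatSubgroup_connectedComponentIn hGgrp)
    ((connectedComponentIn_subset _ _).trans hGu) hlie⟩
end

section
/- Let m_1,…,m_{2d} be Majorana operators ({m_i,m_j} = 2δ_{ij}I) on the Fock space of d modes and define L'_FLO = 2^{−2d}·(Π_{i=1}^d (I⊗I + m_{2i−1}m_{2i}⊗m_{2i−1}m_{2i}))·(Π_{j=1}^d (I⊗I + m_{2j}m_{2j+1}⊗m_{2j}m_{2j+1})) (indices mod 2d). Then, with P^± = (I±Q)/2 where Q = (−1)^{Σ n̂_k} is the parity operator, tr((P^+⊗P^+)L'_FLO) = (1 + (−1)^d)/2; in particular the positive-parity component of L'_FLO is nonzero if and only if d is even. -/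
open Matrix Kronecker

/-- `Q_{k,l} = m_k m_l ⊗ m_k m_l`. -/
noncomputable def Qkl {d : ℕ} (m : ℕ → Matrix (Fin (2 ^ d)) (Fin (2 ^ d)) ℂ) (k l : ℕ) :
    Matrix (Fin (2 ^ d) × Fin (2 ^ d)) (Fin (2 ^ d) × Fin (2 ^ d)) ℂ :=
  (m k * m l) ⊗ₖ (m k * m l)

/-- The operator `L'_FLO` of Lemma 5 (0-based Majorana indices, second factor cyclic). -/
noncomputable def LFLO (d : ℕ) (m : ℕ → Matrix (Fin (2 ^ d)) (Fin (2 ^ d)) ℂ) :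
    Matrix (Fin (2 ^ d) × Fin (2 ^ d)) (Fin (2 ^ d) × Fin (2 ^ d)) ℂ :=
  ((2 : ℂ) ^ (2 * d))⁻¹ •
    ((List.ofFn fun i : Fin d => (1 : Matrix (Fin (2 ^ d) × Fin (2 ^ d))
        (Fin (2 ^ d) × Fin (2 ^ d)) ℂ) + Qkl m (2 * (i : ℕ)) (2 * (i : ℕ) + 1)).prod *
      (List.ofFn fun j : Fin d => (1 : Matrix (Fin (2 ^ d) × Fin (2 ^ d))
        (Fin (2 ^ d) × Fin (2 ^ d)) ℂ) +
          Qkl m (2 * (j : ℕ) + 1) ((2 * (j : ℕ) + 2) % (2 * d))).prod)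

/-!
Expanding both layers, `L'_FLO = 2^{-2d} ∑_{A,B} x_{AB} ⊗ x_{AB}`, where `x_{AB}` is the product
of the Majoranas along the bonds `A` of the first layer followed by the bonds `B` of the second,
so `tr((P⁺ ⊗ P⁺) (x_{AB} ⊗ x_{AB})) = tr(P⁺ x_{AB})²`. By the anticommutation relations `x_{AB}`
is, up to sign, the ordered monomial `m_Z` in the Majoranas occurring an odd number of times, and
the sign disappears in the square. As `Q` is a multiple of `m_{[2d]}` and every `m_S` with
`S ≠ ∅` is traceless, `tr(P⁺ m_Z)` vanishes unless `Z = ∅` or `Z = [2d]`. Comparing the two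
layers bond by bond, this forces `A` and `B` to be empty or full, and the four surviving terms
give `2^{-2d} · 2 (1 + (-1)^d) 4^{d-1}`.
-/

open Finset
open scoped symmDiff

namespace Majorana

section Clifford

variable {R : Type*} [Ring R] {m : ℕ → R} {n : ℕ}

structure CliffordRelations (m : ℕ → R) (n : ℕ) : Prop where
  mul_self : ∀ i < n, m i * m i = 1
  anticomm : ∀ i < n, ∀ j < n, i ≠ j → m i * m j = -(m j * m i)

lemma CliffordRelations.of_anticommutator [Module ℂ R]
    (h : ∀ i j, i < n → j < n → m i * m j + m j * m i = if i = j then (2 : ℂ) • (1 : R) else 0) :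
    CliffordRelations m n where
  mul_self i hi := by
    have h2 := h i i hi hi
    rw [if_pos rfl, ← two_smul ℂ] at h2
    exact smul_right_injective R two_ne_zero h2
  anticomm i hi j hj hij := by
    have h2 := h i j hi hj
    rw [if_neg hij] at h2
    exact eq_neg_of_add_eq_zero_left h2

def orderedProd (m : ℕ → R) (S : Finset ℕ) : R :=
  (S.sort.map m).prod

@[simp] lemma orderedProd_empty : orderedProd m ∅ = 1 := by
  simp [orderedProd]

@[simp] lemma orderedProd_singleton (a : ℕ) : orderedProd m {a} = m a := by
  simp [orderedProd]

lemma orderedProd_insert {a : ℕ} {S : Finset ℕ} (h : ∀ x ∈ S, a < x) :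
    orderedProd m (insert a S) = m a * orderedProd m S := by
  rw [orderedProd, sort_insert _ (fun b hb => (h b hb).le) (fun ha => lt_irrefl a (h a ha))]
  rfl

lemma CliffordRelations.mul_orderedProd (hm : CliffordRelations m n) {a : ℕ} (ha : a < n)
    {S : Finset ℕ} (hS : S ⊆ range n) :
    ∃ u : ℤˣ, m a * orderedProd m S = u • orderedProd m ({a} ∆ S) := by
  induction S using Finset.induction_on_min with
  | empty =>
    refine ⟨1, ?_⟩
    rw [one_smul, show {a} ∆ (∅ : Finset ℕ) = {a} from symmDiff_bot _, orderedProd_empty, mul_one,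
      orderedProd_singleton]
  | insert k S hk ih =>
    have hkn : k < n := mem_range.mp (hS (mem_insert_self k S))
    obtain ⟨u, hu⟩ := ih ((subset_insert k S).trans hS)
    rcases lt_trichotomy a k with hak | rfl | hka
    · have hset : {a} ∆ insert k S = insert a (insert k S) := by
        ext x; simp only [mem_symmDiff, mem_singleton, mem_insert]; grind
      refine ⟨1, ?_⟩
      rw [hset, one_smul, orderedProd_insert (S := insert k S), orderedProd_insert hk]
      simp only [mem_insert, forall_eq_or_imp]
      exact ⟨hak, fun x hx => hak.trans (hk x hx)⟩
    · have hset : {a} ∆ insert a S = S := by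
        ext x; simp only [mem_symmDiff, mem_singleton, mem_insert]; grind
      refine ⟨1, ?_⟩
      rw [orderedProd_insert hk, ← mul_assoc, hm.mul_self a ha, one_mul, one_smul, hset]
    · have hset : {a} ∆ insert k S = insert k ({a} ∆ S) := by
        ext x; simp only [mem_symmDiff, mem_singleton, mem_insert]; grind
      refine ⟨-u, ?_⟩
      rw [orderedProd_insert hk, ← mul_assoc, hm.anticomm a ha k hkn hka.ne', neg_mul, mul_assoc,
        hu, mul_smul_comm, hset, orderedProd_insert, Units.neg_smul]
      intro x hx
      simp only [mem_symmDiff, mem_singleton] at hx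
      grind

def oddOccurrences {α : Type*} [DecidableEq α] (l : List α) : Finset α :=
  {x ∈ l.toFinset | Odd (l.count x)}

section OddOccurrences

variable {α : Type*} [DecidableEq α]

lemma mem_oddOccurrences {l : List α} {x : α} : x ∈ oddOccurrences l ↔ Odd (l.count x) := by
  simp only [oddOccurrences, mem_filter, List.mem_toFinset, and_iff_right_iff_imp]
  exact fun h => List.count_pos_iff.mp h.pos

lemma oddOccurrences_append (l₁ l₂ : List α) :
    oddOccurrences (l₁ ++ l₂) = oddOccurrences l₁ ∆ oddOccurrences l₂ := by
  ext x
  simp only [mem_symmDiff, mem_oddOccurrences, List.count_append, Nat.odd_add']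
  grind

lemma oddOccurrences_cons (a : α) (l : List α) :
    oddOccurrences (a :: l) = {a} ∆ oddOccurrences l := by
  rw [← List.singleton_append, oddOccurrences_append]
  congr
  ext x
  by_cases h : a = x <;> simp [mem_oddOccurrences, h, eq_comm]

end OddOccurrences

lemma oddOccurrences_sort {α : Type*} [LinearOrder α] (S : Finset α) :
    oddOccurrences S.sort = S := by
  ext x
  rw [mem_oddOccurrences, (sort_nodup S _).count]
  split_ifs with h <;> simp_all

lemma CliffordRelations.prod_map_eq_smul_orderedProd (hm : CliffordRelations m n)
    {l : List ℕ} (hl : ∀ x ∈ l, x < n) :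
    ∃ u : ℤˣ, (l.map m).prod = u • orderedProd m (oddOccurrences l) := by
  induction l with
  | nil => exact ⟨1, by simp [oddOccurrences]⟩
  | cons a l ih =>
    obtain ⟨u, hu⟩ := ih fun x hx => hl x (List.mem_cons_of_mem a hx)
    have hsub : oddOccurrences l ⊆ range n := fun x hx =>
      mem_range.mpr (hl x (List.mem_cons_of_mem a
        (List.count_pos_iff.mp (mem_oddOccurrences.mp hx).pos)))
    obtain ⟨v, hv⟩ := hm.mul_orderedProd (hl a List.mem_cons_self) hsub
    refine ⟨u * v, ?_⟩
    rw [List.map_cons, List.prod_cons, hu, mul_smul_comm, hv, smul_smul, oddOccurrences_cons]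

lemma CliffordRelations.orderedProd_mul_orderedProd (hm : CliffordRelations m n)
    {S T : Finset ℕ} (hS : S ⊆ range n) (hT : T ⊆ range n) :
    ∃ u : ℤˣ, orderedProd m S * orderedProd m T = u • orderedProd m (S ∆ T) := by
  have hl : ∀ x ∈ S.sort ++ T.sort, x < n := by
    intro x hx
    rcases List.mem_append.mp hx with hx | hx
    exacts [mem_range.mp (hS ((mem_sort _).mp hx)), mem_range.mp (hT ((mem_sort _).mp hx))]
  obtain ⟨u, hu⟩ := hm.prod_map_eq_smul_orderedProd hl
  rw [oddOccurrences_append, oddOccurrences_sort, oddOccurrences_sort, List.map_append,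
    List.prod_append] at hu
  exact ⟨u, hu⟩

end Clifford

lemma prod_map_one_add {α R : Type*} [LinearOrder α] [Semiring R] (g : α → R) (S : Finset α) :
    (S.sort.map fun i => 1 + g i).prod = ∑ A ∈ S.powerset, (A.sort.map g).prod := by
  induction S using Finset.induction_on_min with
  | empty => simp
  | insert a S ha ih =>
    have haS : a ∉ S := fun h => lt_irrefl a (ha a h)
    rw [sort_insert _ (fun b hb => (ha b hb).le) haS, List.map_cons, List.prod_cons, ih, add_mul,
      one_mul, mul_sum, sum_powerset_insert haS]
    congr 1
    refine sum_congr rfl fun A hA => ?_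
    have hA' : ∀ b ∈ A, a < b := fun b hb => ha b (mem_powerset.mp hA hb)
    rw [sort_insert _ (fun b hb => (hA' b hb).le) fun h => lt_irrefl a (hA' a h)]
    rfl

lemma prod_map_kronecker_self {ι α : Type*} [Fintype ι] [DecidableEq ι] [CommSemiring α]
    (l : List (Matrix ι ι α)) : (l.map fun x => x ⊗ₖ x).prod = l.prod ⊗ₖ l.prod := by
  induction l with
  | nil => simp
  | cons a l ih => simp [ih, mul_kronecker_mul]

lemma prod_flatMap_map {M : Type*} [Monoid M] (m : ℕ → M) (w : ℕ → List ℕ) (l : List ℕ) :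
    ((l.flatMap w).map m).prod = (l.map fun i => ((w i).map m).prod).prod := by
  induction l with
  | nil => simp
  | cons a l ih => simp [ih]

lemma ofFn_eq_map_sort_range {β : Type*} (d : ℕ) (g : ℕ → β) :
    List.ofFn (fun i : Fin d => g i) = (range d).sort.map g := by
  rw [sort_range, ← List.map_coe_finRange_eq_range, List.map_map, List.ofFn_eq_map]
  rfl

lemma prod_ofFn_one_add_kronecker_self {ι α : Type*} [Fintype ι] [DecidableEq ι] [CommSemiring α]
    (d : ℕ) (y : ℕ → Matrix ι ι α) :
    (List.ofFn fun i : Fin d => 1 + y i ⊗ₖ y i).prod =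
      ∑ A ∈ (range d).powerset, (A.sort.map y).prod ⊗ₖ (A.sort.map y).prod := by
  rw [ofFn_eq_map_sort_range d fun i => 1 + y i ⊗ₖ y i, prod_map_one_add]
  simp_rw [← prod_map_kronecker_self, List.map_map]
  rfl

def evenBond (i : ℕ) : List ℕ := [2 * i, 2 * i + 1]

def oddBond (d j : ℕ) : List ℕ := [2 * j + 1, (2 * j + 2) % (2 * d)]

def bondWord (d : ℕ) (A B : Finset ℕ) : List ℕ :=
  A.sort.flatMap evenBond ++ B.sort.flatMap (oddBond d)

lemma Qkl_evenBond {d : ℕ} (m : ℕ → Matrix (Fin (2 ^ d)) (Fin (2 ^ d)) ℂ) (i : ℕ) :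
    Qkl m (2 * i) (2 * i + 1) = ((evenBond i).map m).prod ⊗ₖ ((evenBond i).map m).prod := by
  simp [Qkl, evenBond]

lemma Qkl_oddBond {d : ℕ} (m : ℕ → Matrix (Fin (2 ^ d)) (Fin (2 ^ d)) ℂ) (j : ℕ) :
    Qkl m (2 * j + 1) ((2 * j + 2) % (2 * d)) =
      ((oddBond d j).map m).prod ⊗ₖ ((oddBond d j).map m).prod := by
  simp [Qkl, oddBond]

lemma LFLO_eq (d : ℕ) (m : ℕ → Matrix (Fin (2 ^ d)) (Fin (2 ^ d)) ℂ) :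
    LFLO d m = ((2 : ℂ) ^ (2 * d))⁻¹ • ∑ A ∈ (range d).powerset, ∑ B ∈ (range d).powerset,
      ((bondWord d A B).map m).prod ⊗ₖ ((bondWord d A B).map m).prod := by
  simp only [LFLO, Qkl_evenBond, Qkl_oddBond]
  rw [prod_ofFn_one_add_kronecker_self d fun i => ((evenBond i).map m).prod,
    prod_ofFn_one_add_kronecker_self d fun j => ((oddBond d j).map m).prod, sum_mul_sum]
  simp_rw [← mul_kronecker_mul, bondWord, List.map_append, List.prod_append, prod_flatMap_map]

lemma trace_kronecker_self_mul_LFLO (d : ℕ) (m : ℕ → Matrix (Fin (2 ^ d)) (Fin (2 ^ d)) ℂ)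
    (P : Matrix (Fin (2 ^ d)) (Fin (2 ^ d)) ℂ) :
    trace ((P ⊗ₖ P) * LFLO d m) = ((2 : ℂ) ^ (2 * d))⁻¹ *
      ∑ A ∈ (range d).powerset, ∑ B ∈ (range d).powerset,
        trace (P * ((bondWord d A B).map m).prod) ^ 2 := by
  rw [LFLO_eq, Matrix.mul_smul, trace_smul, smul_eq_mul]
  simp_rw [Matrix.mul_sum, trace_sum, ← mul_kronecker_mul, trace_kronecker, sq]

/-- For `x < 2 * d`, the index `j` of the second-layer bond `oddBond d j` containing `x`. -/
def prevBond (d x : ℕ) : ℕ := if x = 0 then d - 1 else (x - 1) / 2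

lemma count_evenBond (x i : ℕ) : (evenBond i).count x = if x / 2 = i then 1 else 0 := by
  simp only [evenBond, List.count_cons, List.count_nil, beq_iff_eq]
  split_ifs <;> omega

lemma count_oddBond {d x j : ℕ} (hx : x < 2 * d) (hj : j < d) :
    (oddBond d j).count x = if prevBond d x = j then 1 else 0 := by
  have hmod : (2 * j + 2) % (2 * d) = if j + 1 = d then 0 else 2 * j + 2 := by
    split_ifs with h
    · rw [show 2 * j + 2 = 2 * d by omega, Nat.mod_self]
    · exact Nat.mod_eq_of_lt (by omega)
  simp only [oddBond, prevBond, hmod, List.count_cons, List.count_nil, beq_iff_eq]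
  split_ifs <;> omega

lemma count_flatMap_sort {w : ℕ → List ℕ} {A : Finset ℕ} {x k : ℕ}
    (hw : ∀ i ∈ A, (w i).count x = if k = i then 1 else 0) :
    (A.sort.flatMap w).count x = if k ∈ A then 1 else 0 := by
  rw [List.count_flatMap, ((sort_perm_toList A _).map _).sum_eq, sum_map_toList]
  exact (sum_congr rfl hw).trans (sum_ite_eq A k _)

lemma mem_oddOccurrences_bondWord {d : ℕ} {A B : Finset ℕ} (hB : B ⊆ range d) {x : ℕ}
    (hx : x < 2 * d) :
    x ∈ oddOccurrences (bondWord d A B) ↔ ¬(x / 2 ∈ A ↔ prevBond d x ∈ B) := by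
  rw [mem_oddOccurrences, bondWord, List.count_append,
    count_flatMap_sort fun i _ => count_evenBond x i,
    count_flatMap_sort fun j hj => count_oddBond hx (mem_range.mp (hB hj))]
  split_ifs <;> simp_all

lemma lt_of_mem_bondWord {d : ℕ} {A B : Finset ℕ} (hA : A ⊆ range d) (hB : B ⊆ range d) :
    ∀ x ∈ bondWord d A B, x < 2 * d := by
  intro x hx
  simp only [bondWord, List.mem_append, List.mem_flatMap, mem_sort, evenBond, oddBond,
    List.mem_cons, List.mem_nil_iff, or_false] at hx
  rcases hx with ⟨i, hi, hx⟩ | ⟨j, hj, hx | hx⟩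
  · have := mem_range.mp (hA hi); omega
  · have := mem_range.mp (hB hj); omega
  · exact hx ▸ Nat.mod_lt _ (by have := mem_range.mp (hB hj); omega)

lemma oddOccurrences_bondWord_subset {d : ℕ} {A B : Finset ℕ} (hA : A ⊆ range d)
    (hB : B ⊆ range d) : oddOccurrences (bondWord d A B) ⊆ range (2 * d) := fun x hx =>
  mem_range.mpr (lt_of_mem_bondWord hA hB x
    (List.count_pos_iff.mp (mem_oddOccurrences.mp hx).pos))

lemma eq_empty_or_eq_range_of_mem_iff_succ_mem {d : ℕ} {A : Finset ℕ} (hA : A ⊆ range d)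
    (h : ∀ i, i + 1 < d → (i ∈ A ↔ i + 1 ∈ A)) : A = ∅ ∨ A = range d := by
  have hconst : ∀ i < d, i ∈ A ↔ 0 ∈ A := by
    intro i hi
    induction i with
    | zero => rfl
    | succ i ih => rw [← h i hi, ih (by omega)]
  by_cases h0 : 0 ∈ A
  · exact Or.inr (hA.antisymm fun i hi => (hconst i (mem_range.mp hi)).mpr h0)
  · exact Or.inl (eq_empty_of_forall_notMem fun i hi =>
      h0 ((hconst i (mem_range.mp (hA hi))).mp hi))

/-- Majoranas `2i+1` and `2i+2` lie in the first-layer bonds `i` and `i+1` but both in the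
second-layer bond `i`, so a parity pattern that is uniform in `x` propagates along both chains. -/
lemma eq_empty_or_eq_range_of_forall_iff {d : ℕ} {A B : Finset ℕ} (hA : A ⊆ range d)
    (hB : B ⊆ range d) {p : Prop} (h : ∀ x < 2 * d, (x / 2 ∈ A ↔ prevBond d x ∈ B) ↔ p) :
    (A = ∅ ∨ A = range d) ∧ (B = ∅ ∨ B = range d) := by
  have hodd : ∀ i < d, (i ∈ A ↔ i ∈ B) ↔ p := fun i hi => by
    simpa [prevBond, show (2 * i + 1) / 2 = i by omega] using h (2 * i + 1) (by omega)
  have heven : ∀ i, i + 1 < d → ((i + 1 ∈ A ↔ i ∈ B) ↔ p) := fun i hi => by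
    simpa [prevBond, show (2 * i + 2) / 2 = i + 1 by omega, show (2 * i + 1) / 2 = i by omega]
      using h (2 * i + 2) (by omega)
  constructor <;> refine eq_empty_or_eq_range_of_mem_iff_succ_mem ‹_› fun i hi => ?_
  · have := hodd i (by omega); have := heven i hi; tauto
  · have := hodd (i + 1) hi; have := heven i hi; tauto

lemma eq_empty_or_eq_range_of_oddOccurrences_bondWord {d : ℕ} {A B : Finset ℕ} (hA : A ⊆ range d)
    (hB : B ⊆ range d)
    (hZ : oddOccurrences (bondWord d A B) = ∅ ∨ oddOccurrences (bondWord d A B) = range (2 * d)) :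
    (A = ∅ ∨ A = range d) ∧ (B = ∅ ∨ B = range d) := by
  rcases hZ with hZ | hZ
  · refine eq_empty_or_eq_range_of_forall_iff hA hB (p := True) fun x hx => ?_
    simpa [hZ] using (mem_oddOccurrences_bondWord hB hx (A := A)).symm
  · refine eq_empty_or_eq_range_of_forall_iff hA hB (p := False) fun x hx => ?_
    simpa [hZ, hx] using (mem_oddOccurrences_bondWord hB hx (A := A)).symm

lemma oddOccurrences_bondWord_of_eq_empty_or_eq_range {d : ℕ} {A B : Finset ℕ}
    (hA : A = ∅ ∨ A = range d) (hB : B = ∅ ∨ B = range d) :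
    oddOccurrences (bondWord d A B) = if A = B then ∅ else range (2 * d) := by
  have hA' : A ⊆ range d := by rcases hA with rfl | rfl <;> simp
  have hB' : B ⊆ range d := by rcases hB with rfl | rfl <;> simp
  ext x
  by_cases hx : x < 2 * d
  · have hprev : prevBond d x < d := by unfold prevBond; split_ifs <;> omega
    rw [mem_oddOccurrences_bondWord hB' hx]
    have hR : range d ≠ ∅ := nonempty_iff_ne_empty.mp (nonempty_range_iff.mpr (by omega))
    rcases hA with rfl | rfl <;> rcases hB with rfl | rfl <;>
      simp [hx, hprev, hR, hR.symm, show x / 2 < d by omega]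
  · have hZ : x ∉ oddOccurrences (bondWord d A B) := fun h =>
      hx (mem_range.mp (oddOccurrences_bondWord_subset hA' hB' h))
    split_ifs <;> simp [hZ, hx]

lemma trace_orderedProd_eq_zero {ι : Type*} [Fintype ι] [DecidableEq ι] {n : ℕ}
    {m : ℕ → Matrix ι ι ℂ}
    (htr : ∀ s : Finset (Fin n), s.Nonempty →
      Matrix.trace ((s.sort (· ≤ ·)).map fun i => m (i : ℕ)).prod = 0)
    {S : Finset ℕ} (hS : S ⊆ range n) (hS₀ : S.Nonempty) : trace (orderedProd m S) = 0 := by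
  have hlt : ∀ x ∈ S, x < n := fun x hx => mem_range.mp (hS hx)
  have hsort : (S.attachFin hlt).sort.map Fin.val = S.sort := by
    have := map_sort Fin.valEmbedding (S.attachFin hlt) (· ≤ ·) (· ≤ ·) fun _ _ _ _ => Iff.rfl
    rw [map_eq_image] at this
    simpa using this
  rw [orderedProd, ← hsort, ← List.flatMap_pure_eq_map Fin.val]
  obtain ⟨x, hx⟩ := hS₀
  exact htr _ ⟨⟨x, hlt x hx⟩, (mem_attachFin hlt).mpr hx⟩

section Trace

variable {ι : Type*} [Fintype ι] [DecidableEq ι] {d : ℕ} {m : ℕ → Matrix ι ι ℂ}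
  {Q : Matrix ι ι ℂ}

lemma trace_parityProj_mul_orderedProd (hm : CliffordRelations m (2 * d))
    (hQ : Q = Complex.I ^ d • orderedProd m (range (2 * d))) {Z : Finset ℕ}
    (hZ : Z ⊆ range (2 * d)) :
    ∃ u : ℤˣ, trace (((2 : ℂ)⁻¹ • (1 + Q)) * orderedProd m Z) =
      2⁻¹ * (trace (orderedProd m Z) +
        Complex.I ^ d * (u • trace (orderedProd m (range (2 * d) \ Z)))) := by
  obtain ⟨u, hu⟩ := hm.orderedProd_mul_orderedProd (subset_refl _) hZ
  refine ⟨u, ?_⟩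
  rw [smul_mul_assoc, add_mul, one_mul, hQ, smul_mul_assoc, hu, symmDiff_of_ge hZ, trace_smul,
    trace_add, trace_smul, trace_smul, smul_eq_mul, smul_eq_mul]

lemma trace_parityProj_mul_orderedProd_eq_zero (hm : CliffordRelations m (2 * d))
    (hQ : Q = Complex.I ^ d • orderedProd m (range (2 * d)))
    (htr : ∀ S ⊆ range (2 * d), S.Nonempty → trace (orderedProd m S) = 0) {Z : Finset ℕ}
    (hZ : Z ⊆ range (2 * d)) (hZ₀ : Z.Nonempty) (hZ₁ : Z ≠ range (2 * d)) :
    trace (((2 : ℂ)⁻¹ • (1 + Q)) * orderedProd m Z) = 0 := by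
  obtain ⟨u, hu⟩ := trace_parityProj_mul_orderedProd hm hQ hZ
  have hcompl : (range (2 * d) \ Z).Nonempty :=
    sdiff_nonempty.mpr fun h => hZ₁ (hZ.antisymm h)
  rw [hu, htr Z hZ hZ₀, htr _ sdiff_subset hcompl]
  simp

lemma trace_parityProj_mul_orderedProd_empty_sq (hd : 1 ≤ d) (hm : CliffordRelations m (2 * d))
    (hQ : Q = Complex.I ^ d • orderedProd m (range (2 * d)))
    (htr : ∀ S ⊆ range (2 * d), S.Nonempty → trace (orderedProd m S) = 0) :
    trace (((2 : ℂ)⁻¹ • (1 + Q)) * orderedProd m ∅) ^ 2 = (Fintype.card ι / 2 : ℂ) ^ 2 := by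
  obtain ⟨u, hu⟩ := trace_parityProj_mul_orderedProd hm hQ (empty_subset _)
  rw [hu, sdiff_empty, htr _ subset_rfl (nonempty_range_iff.mpr (by omega))]
  simp [div_eq_inv_mul]

lemma trace_parityProj_mul_orderedProd_range_sq (hd : 1 ≤ d) (hm : CliffordRelations m (2 * d))
    (hQ : Q = Complex.I ^ d • orderedProd m (range (2 * d)))
    (htr : ∀ S ⊆ range (2 * d), S.Nonempty → trace (orderedProd m S) = 0) :
    trace (((2 : ℂ)⁻¹ • (1 + Q)) * orderedProd m (range (2 * d))) ^ 2 =
      (-1) ^ d * (Fintype.card ι / 2 : ℂ) ^ 2 := by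
  obtain ⟨u, hu⟩ := trace_parityProj_mul_orderedProd hm hQ subset_rfl
  rw [hu, sdiff_self, htr _ subset_rfl (nonempty_range_iff.mpr (by omega))]
  simp only [bot_eq_empty, orderedProd_empty, trace_one, zero_add]
  rw [mul_pow, mul_pow, smul_pow, Int.units_sq, one_smul, ← pow_mul, mul_comm d, pow_mul,
    Complex.I_sq]
  ring

end Trace

lemma sum_trace_parityProj_mul_bondWord_sq {ι : Type*} [Fintype ι] [DecidableEq ι] {d : ℕ}
    {m : ℕ → Matrix ι ι ℂ} {Q : Matrix ι ι ℂ} (hd : 1 ≤ d) (hm : CliffordRelations m (2 * d))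
    (hQ : Q = Complex.I ^ d • orderedProd m (range (2 * d)))
    (htr : ∀ S ⊆ range (2 * d), S.Nonempty → trace (orderedProd m S) = 0) :
    ∑ A ∈ (range d).powerset, ∑ B ∈ (range d).powerset,
        trace (((2 : ℂ)⁻¹ • (1 + Q)) * ((bondWord d A B).map m).prod) ^ 2 =
      2 * (1 + (-1) ^ d) * (Fintype.card ι / 2 : ℂ) ^ 2 := by
  have hterm : ∀ A ⊆ range d, ∀ B ⊆ range d,
      trace (((2 : ℂ)⁻¹ • (1 + Q)) * ((bondWord d A B).map m).prod) ^ 2 =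
        trace (((2 : ℂ)⁻¹ • (1 + Q)) * orderedProd m (oddOccurrences (bondWord d A B))) ^ 2 := by
    intro A hA B hB
    obtain ⟨u, hu⟩ := hm.prod_map_eq_smul_orderedProd (lt_of_mem_bondWord hA hB)
    rw [hu, mul_smul_comm, trace_smul, smul_pow, Int.units_sq, one_smul]
  have hR : (∅ : Finset ℕ) ≠ range d := (nonempty_range_iff.mpr (by omega)).ne_empty.symm
  have hcorners : ({∅, range d} : Finset (Finset ℕ)) ⊆ (range d).powerset := by
    simp [insert_subset_iff]
  rw [← sum_product', ← sum_subset (product_subset_product hcorners hcorners), sum_product,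
    sum_pair hR, sum_pair hR, sum_pair hR]
  · simp only [hterm, empty_subset, subset_refl, oddOccurrences_bondWord_of_eq_empty_or_eq_range,
      true_or, or_true, if_pos, hR, hR.symm, if_false,
      trace_parityProj_mul_orderedProd_empty_sq hd hm hQ htr,
      trace_parityProj_mul_orderedProd_range_sq hd hm hQ htr]
    ring
  · rintro ⟨A, B⟩ hAB hC
    obtain ⟨hA, hB⟩ : A ⊆ range d ∧ B ⊆ range d := by simpa using hAB
    obtain ⟨hZ₀, hZ₁⟩ := not_or.mp fun h =>
      hC (by simpa using eq_empty_or_eq_range_of_oddOccurrences_bondWord hA hB h)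
    rw [hterm A hA B hB, trace_parityProj_mul_orderedProd_eq_zero hm hQ htr
      (oddOccurrences_bondWord_subset hA hB) (nonempty_iff_ne_empty.mpr hZ₀) hZ₁,
      zero_pow two_ne_zero]

end Majorana

theorem stmt_19_general (d : ℕ) (hd : 1 ≤ d)
    (m : ℕ → Matrix (Fin (2 ^ d)) (Fin (2 ^ d)) ℂ)
    (hcar : ∀ i j, i < 2 * d → j < 2 * d → m i * m j + m j * m i =
      if i = j then (2 : ℂ) • (1 : Matrix (Fin (2 ^ d)) (Fin (2 ^ d)) ℂ) else 0)
    (Q : Matrix (Fin (2 ^ d)) (Fin (2 ^ d)) ℂ)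
    (hQ : Q = Complex.I ^ d • (List.ofFn fun i : Fin (2 * d) => m (i : ℕ)).prod)
    (htr : ∀ s : Finset (Fin (2 * d)), s.Nonempty →
      Matrix.trace ((s.sort (· ≤ ·)).map fun i => m (i : ℕ)).prod = 0) :
    Matrix.trace
        ((((2 : ℂ)⁻¹ • ((1 : Matrix (Fin (2 ^ d)) (Fin (2 ^ d)) ℂ) + Q)) ⊗ₖ
            ((2 : ℂ)⁻¹ • ((1 : Matrix (Fin (2 ^ d)) (Fin (2 ^ d)) ℂ) + Q))) *
          LFLO d m) =
      (1 + (-1 : ℂ) ^ d) / 2 := by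
  have hm : Majorana.CliffordRelations m (2 * d) := .of_anticommutator hcar
  have hQ' : Q = Complex.I ^ d • Majorana.orderedProd m (Finset.range (2 * d)) := by
    rw [hQ, Majorana.orderedProd, ← Majorana.ofFn_eq_map_sort_range]
  rw [Majorana.trace_kronecker_self_mul_LFLO,
    Majorana.sum_trace_parityProj_mul_bondWord_sq hd hm hQ' fun S hS hS₀ =>
      Majorana.trace_orderedProd_eq_zero htr hS hS₀,
    Fintype.card_fin, Nat.cast_pow, Nat.cast_ofNat, pow_mul']
  field_simp

/-- For Majorana operators `m_0,…,m_{2d-1}` on the `2^d`-dimensional Fock space of `d`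
modes, with parity operator `Q = i^d m_0 ⋯ m_{2d-1}` and all nonempty products of
distinct Majoranas traceless, the positive-parity component of `L'_FLO` satisfies
`tr((P⁺⊗P⁺) L'_FLO) = (1 + (-1)^d)/2`; in particular it is nonzero iff `d` is even. -/
theorem stmt_19 (d : ℕ) (hd : 1 ≤ d)
    (m : ℕ → Matrix (Fin (2 ^ d)) (Fin (2 ^ d)) ℂ)
    (hherm : ∀ i, i < 2 * d → (m i)ᴴ = m i)
    (hcar : ∀ i j, i < 2 * d → j < 2 * d → m i * m j + m j * m i =
      if i = j then (2 : ℂ) • (1 : Matrix (Fin (2 ^ d)) (Fin (2 ^ d)) ℂ) else 0)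
    (Q : Matrix (Fin (2 ^ d)) (Fin (2 ^ d)) ℂ)
    (hQ : Q = Complex.I ^ d • (List.ofFn fun i : Fin (2 * d) => m (i : ℕ)).prod)
    (htr : ∀ s : Finset (Fin (2 * d)), s.Nonempty →
      Matrix.trace ((s.sort (· ≤ ·)).map fun i => m (i : ℕ)).prod = 0) :
    Matrix.trace
        ((((2 : ℂ)⁻¹ • ((1 : Matrix (Fin (2 ^ d)) (Fin (2 ^ d)) ℂ) + Q)) ⊗ₖ
            ((2 : ℂ)⁻¹ • ((1 : Matrix (Fin (2 ^ d)) (Fin (2 ^ d)) ℂ) + Q))) *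
          LFLO d m) =
      (1 + (-1 : ℂ) ^ d) / 2 :=
  stmt_19_general d hd m hcar Q hQ htr
end
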